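/- Replacement of λ^{-j}L_f^j𝟙 by the eigenfunction in Birkhoff sums: Let f:Ω→ℝ be continuous, λ>0 and h:Ω→ℝ a strictly positive continuous function such that ‖λ^{-j} L_f^j 𝟙 − h‖₀ → 0 as j→∞. Then for every continuous φ:Ω→ℝ, ‖(1/n)·(λ^{-n} L_f^n(S_nφ) − Σ_{j=0}^{n-1} λ^{-(n-j)} L_f^{n-j}(φ·h))‖₀ → 0 as n→∞. -/

import Mathlib

open MeasureTheory Filter Topology

noncomputable def dOmega {M : Type*} [MetricSpace M] (x y : ℕ → M) : ℝ :=
  ∑' n : ℕ, (1 / 2 : ℝ) ^ (n + 1) * dist (x n) (y n)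

/-- The sequence `(a, x₁, x₂, …)` obtained by prepending `a` to `x`. -/
def consSeq {M : Type*} (a : M) (x : ℕ → M) : ℕ → M := fun n => Nat.casesOn n a x

/-- The left shift `σ(x₁,x₂,…) = (x₂,x₃,…)`. -/
def shift {M : Type*} (x : ℕ → M) : ℕ → M := fun n => x (n + 1)

/-- The Ruelle transfer operator with a priori measure `μ` and potential `f`. -/
noncomputable def Ruelle {M : Type*} [MeasurableSpace M] (μ : Measure M)
    (f φ : (ℕ → M) → ℝ) : (ℕ → M) → ℝ :=
  fun x => ∫ a, Real.exp (f (consSeq a x)) * φ (consSeq a x) ∂μ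

/-- The `n`-th Birkhoff sum `S_n φ = Σ_{j=0}^{n-1} φ ∘ σ^j`. -/
noncomputable def birkhoff {M : Type*} (φ : (ℕ → M) → ℝ) (n : ℕ) : (ℕ → M) → ℝ :=
  fun x => ∑ j ∈ Finset.range n, φ (shift^[j] x)

/-- `f` is `α`-Hölder with respect to the metric `dOmega`. -/
def IsHolder {M : Type*} [MetricSpace M] (α : ℝ) (f : (ℕ → M) → ℝ) : Prop :=
  ∃ C : ℝ, 0 ≤ C ∧ ∀ x y, |f x - f y| ≤ C * dOmega x y ^ α

/-!
The transfer identity `L^j (g · ψ ∘ σ^j) = ψ · L^j g` rewrites the difference as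
`Σ_{j<n} λ^{-(n-j)} L^{n-j} (φ · (λ^{-j} L^j 𝟙 - h))`. Since `L` is positive,
`‖λ^{-m} L^m v‖ ≤ ‖v‖ · ‖λ^{-m} L^m 𝟙‖`, and the normalised iterates `λ^{-m} L^m 𝟙` converge, so
they are uniformly bounded. Hence the `j`-th term is `O(‖λ^{-j} L^j 𝟙 - h‖₀)`, and the Cesàro
means of these errors tend to `0`.
-/

open Finset

lemma Module.End.monotone_pow {R E : Type*} [Semiring R] [AddCommMonoid E] [Module R E]
    [Preorder E] {T : Module.End R E} (hT : Monotone T) (m : ℕ) : Monotone (T ^ m) := by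
  rw [Module.End.coe_pow]
  exact hT.iterate m

lemma Module.End.pow_apply_mul_pow_apply {R A : Type*} [CommSemiring R] [CommSemiring A]
    [Module R A] {T K : Module.End R A} (hTK : ∀ g ψ, T (g * K ψ) = ψ * T g) (j : ℕ) (g ψ : A) :
    (T ^ j) (g * (K ^ j) ψ) = ψ * (T ^ j) g := by
  induction j generalizing g with
  | zero => simp [mul_comm]
  | succ j ih =>
    rw [pow_succ, pow_succ', Module.End.mul_apply, Module.End.mul_apply, hTK, mul_comm, ih,
      Module.End.mul_apply]

section TransferIdentity

variable {𝕜 A : Type*} [Field 𝕜] [CommRing A] [Algebra 𝕜 A] {T K : Module.End 𝕜 A}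

lemma smul_pow_apply_pow_apply (hTK : ∀ g ψ, T (g * K ψ) = ψ * T g) (lam : 𝕜) (φ : A)
    {j n : ℕ} (hj : j ≤ n) :
    (lam ^ n)⁻¹ • (T ^ n) ((K ^ j) φ)
      = (lam ^ (n - j))⁻¹ • (T ^ (n - j)) (φ * ((lam ^ j)⁻¹ • (T ^ j) 1)) := by
  have hsplit : T ^ n = T ^ (n - j) * T ^ j := by rw [← pow_add, Nat.sub_add_cancel hj]
  have hpow : (lam ^ n)⁻¹ = (lam ^ (n - j))⁻¹ * (lam ^ j)⁻¹ := by
    rw [← mul_inv, ← pow_add, Nat.sub_add_cancel hj]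
  rw [hsplit, Module.End.mul_apply, ← one_mul ((K ^ j) φ),
    Module.End.pow_apply_mul_pow_apply hTK, mul_smul_comm, map_smul, smul_smul, hpow]

lemma smul_pow_birkhoff_sub_eq (hTK : ∀ g ψ, T (g * K ψ) = ψ * T g) (lam : 𝕜) (φ u : A)
    (n : ℕ) :
    (lam ^ n)⁻¹ • (T ^ n) (∑ j ∈ range n, (K ^ j) φ)
        - ∑ j ∈ range n, (lam ^ (n - j))⁻¹ • (T ^ (n - j)) (φ * u)
      = ∑ j ∈ range n,
          (lam ^ (n - j))⁻¹ • (T ^ (n - j)) (φ * ((lam ^ j)⁻¹ • (T ^ j) 1 - u)) := by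
  rw [map_sum, smul_sum, ← sum_sub_distrib]
  refine sum_congr rfl fun j hj => ?_
  rw [smul_pow_apply_pow_apply hTK lam φ (mem_range.1 hj).le, mul_sub, map_sub, smul_sub]

end TransferIdentity

section PositiveOperator

variable {X : Type*} [TopologicalSpace X] [CompactSpace X] {T K : C(X, ℝ) →ₗ[ℝ] C(X, ℝ)}

lemma abs_apply_le_norm_mul_apply_one (hT : Monotone T) (g : C(X, ℝ)) (x : X) :
    |T g x| ≤ ‖g‖ * T 1 x := by
  have hg : -(‖g‖ • 1) ≤ g ∧ g ≤ ‖g‖ • 1 := by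
    have := fun y => abs_le.1 (g.norm_coe_le_norm y)
    exact ⟨fun y => by simpa using (this y).1, fun y => by simpa using (this y).2⟩
  have hlow : T (-(‖g‖ • 1)) x ≤ T g x := hT hg.1 x
  have hupp : T g x ≤ T (‖g‖ • 1) x := hT hg.2 x
  simp only [map_neg, map_smul, ContinuousMap.neg_apply, ContinuousMap.smul_apply,
    smul_eq_mul] at hlow hupp
  exact abs_le.2 ⟨by linarith, hupp⟩

lemma norm_apply_le_norm_mul_norm_apply_one (hT : Monotone T) (g : C(X, ℝ)) :
    ‖T g‖ ≤ ‖g‖ * ‖T 1‖ :=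
  (ContinuousMap.norm_le _ (by positivity)).2 fun x =>
    (abs_apply_le_norm_mul_apply_one hT g x).trans <|
      mul_le_mul_of_nonneg_left ((le_abs_self _).trans ((T 1).norm_coe_le_norm x)) (norm_nonneg g)

theorem tendsto_smul_pow_birkhoff_sub (hT : Monotone T) (hTK : ∀ g ψ, T (g * K ψ) = ψ * T g)
    {lam : ℝ} {u : C(X, ℝ)} (hu : Tendsto (fun j => (lam ^ j)⁻¹ • (T ^ j) 1) atTop (𝓝 u))
    (φ : C(X, ℝ)) :
    Tendsto (fun n : ℕ => (n : ℝ)⁻¹ • ((lam ^ n)⁻¹ • (T ^ n) (∑ j ∈ range n, (K ^ j) φ)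
        - ∑ j ∈ range n, (lam ^ (n - j))⁻¹ • (T ^ (n - j)) (φ * u))) atTop (𝓝 0) := by
  obtain ⟨B, hB⟩ : ∃ B, ∀ m, ‖(lam ^ m)⁻¹ • (T ^ m) 1‖ ≤ B :=
    (isBounded_iff_forall_norm_le.1 (Metric.isBounded_range_of_tendsto _ hu)).imp
      fun B hB m => hB _ ⟨m, rfl⟩
  have hnorm (m : ℕ) (v : C(X, ℝ)) : ‖(lam ^ m)⁻¹ • (T ^ m) v‖ ≤ B * ‖v‖ :=
    calc ‖(lam ^ m)⁻¹ • (T ^ m) v‖ ≤ ‖(lam ^ m)⁻¹‖ * (‖v‖ * ‖(T ^ m) 1‖) := by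
          rw [norm_smul]
          gcongr
          exact norm_apply_le_norm_mul_norm_apply_one (Module.End.monotone_pow hT m) v
      _ = ‖(lam ^ m)⁻¹ • (T ^ m) 1‖ * ‖v‖ := by rw [norm_smul]; ring
      _ ≤ B * ‖v‖ := by gcongr; exact hB m
  have herr : Tendsto (fun j => B * ‖φ * ((lam ^ j)⁻¹ • (T ^ j) 1 - u)‖) atTop (𝓝 0) := by
    simpa using
      ((tendsto_const_nhds (x := φ)).mul (tendsto_sub_nhds_zero_iff.2 hu)).norm.const_mul B
  refine squeeze_zero_norm (fun n => ?_) herr.cesaro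
  rw [smul_pow_birkhoff_sub_eq hTK, norm_smul, norm_inv, Real.norm_natCast]
  gcongr
  exact (norm_sum_le _ _).trans (sum_le_sum fun j _ => hnorm _ _)

end PositiveOperator
section Ruelle

variable {M : Type*}

lemma continuous_consSeq [TopologicalSpace M] :
    Continuous fun p : M × (ℕ → M) => consSeq p.1 p.2 :=
  continuous_pi fun n => by
    cases n with
    | zero => exact continuous_fst
    | succ k => exact (continuous_apply k).comp continuous_snd

lemma continuous_shift [TopologicalSpace M] : Continuous (shift : (ℕ → M) → ℕ → M) :=
  continuous_pi fun n => continuous_apply (n + 1)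

noncomputable def shiftKoopman [TopologicalSpace M] : C(ℕ → M, ℝ) →ₗ[ℝ] C(ℕ → M, ℝ) :=
  (ContinuousMap.compRightAlgHom ℝ ℝ ⟨shift, continuous_shift⟩).toLinearMap

lemma coe_shiftKoopman_pow_apply [TopologicalSpace M] (j : ℕ) (φ : C(ℕ → M, ℝ)) :
    ⇑((shiftKoopman ^ j) φ) = φ ∘ shift^[j] := by
  induction j with
  | zero => rfl
  | succ j ih =>
    rw [pow_succ', Module.End.mul_apply, Function.iterate_succ, ← Function.comp_assoc, ← ih]
    rfl

lemma coe_sum_shiftKoopman_pow_apply [TopologicalSpace M] (n : ℕ) (φ : C(ℕ → M, ℝ)) :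
    ⇑(∑ j ∈ range n, (shiftKoopman ^ j) φ) = birkhoff φ n := by
  ext x
  simp [birkhoff, coe_shiftKoopman_pow_apply]

lemma ruelle_mul_comp_shift [MeasurableSpace M] (μ : Measure M) (f g ψ : (ℕ → M) → ℝ) :
    Ruelle μ f (fun y => g y * ψ (shift y)) = fun x => ψ x * Ruelle μ f g x := by
  funext x
  simp only [Ruelle, ← integral_const_mul]
  congr 1
  funext a
  rw [show shift (consSeq a x) = x from rfl]
  ring

variable [TopologicalSpace M] [CompactSpace M] [MeasurableSpace M] [OpensMeasurableSpace M]
  (μ : Measure M) [IsFiniteMeasure μ] {f : (ℕ → M) → ℝ} (hf : Continuous f)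

include hf in
lemma integrable_ruelle_integrand (g : C(ℕ → M, ℝ)) (x : ℕ → M) :
    Integrable (fun a => Real.exp (f (consSeq a x)) * g (consSeq a x)) μ := by
  have hcons : Continuous fun a : M => consSeq a x :=
    continuous_consSeq.comp (continuous_id.prodMk continuous_const)
  exact ((Real.continuous_exp.comp (hf.comp hcons)).mul (g.continuous.comp hcons))
    |>.integrable_of_hasCompactSupport (HasCompactSupport.of_compactSpace _)

variable [TopologicalSpace.PseudoMetrizableSpace M]

include hf in
lemma continuous_ruelle (g : C(ℕ → M, ℝ)) : Continuous (Ruelle μ f g) :=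
  continuous_parametric_integral_of_continuous (μ := μ) (s := Set.univ)
    (f := fun x a => Real.exp (f (consSeq a x)) * g (consSeq a x))
    (((Real.continuous_exp.comp hf).mul g.continuous).comp
      (continuous_consSeq.comp continuous_swap)) isCompact_univ |>.congr fun x => by
    rw [Measure.restrict_univ]
    rfl

noncomputable def ruelleOperator : C(ℕ → M, ℝ) →ₗ[ℝ] C(ℕ → M, ℝ) where
  toFun g := ⟨Ruelle μ f g, continuous_ruelle μ hf g⟩
  map_add' g₁ g₂ := by
    ext x
    simp only [Ruelle, ContinuousMap.coe_mk, ContinuousMap.add_apply, mul_add]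
    exact integral_add (integrable_ruelle_integrand μ hf g₁ x)
      (integrable_ruelle_integrand μ hf g₂ x)
  map_smul' c g := by
    ext x
    simp only [Ruelle, ContinuousMap.coe_mk, ContinuousMap.smul_apply, smul_eq_mul,
      RingHom.id_apply, ← integral_const_mul]
    congr 1
    funext a
    ring

lemma coe_ruelleOperator_pow_apply (n : ℕ) (g : C(ℕ → M, ℝ)) :
    ⇑((ruelleOperator μ hf ^ n) g) = (Ruelle μ f)^[n] g := by
  induction n with
  | zero => rfl
  | succ n ih => rw [pow_succ', Module.End.mul_apply, Function.iterate_succ_apply', ← ih]; rfl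

lemma monotone_ruelleOperator : Monotone (ruelleOperator μ hf) := fun g₁ g₂ hg x =>
  integral_mono (integrable_ruelle_integrand μ hf g₁ x) (integrable_ruelle_integrand μ hf g₂ x)
    fun _ => mul_le_mul_of_nonneg_left (hg _) (Real.exp_pos _).le

lemma ruelleOperator_mul_shiftKoopman (g ψ : C(ℕ → M, ℝ)) :
    ruelleOperator μ hf (g * shiftKoopman ψ) = ψ * ruelleOperator μ hf g :=
  ContinuousMap.ext fun x => congrFun (ruelle_mul_comp_shift μ f g ψ) x

end Ruelle
theorem birkhoff_sum_replace_eigenfunction_general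
    {M : Type*} [MetricSpace M] [CompactSpace M] [MeasurableSpace M] [BorelSpace M]
    (μ : Measure M) [IsProbabilityMeasure μ]
    (f : (ℕ → M) → ℝ) (hf : Continuous f)
    (lam : ℝ)
    (h : (ℕ → M) → ℝ) (hhc : Continuous h)
    (hconv : TendstoUniformly
      (fun (j : ℕ) (x : ℕ → M) => (lam ^ j)⁻¹ * (Ruelle μ f)^[j] 1 x) h atTop) :
    ∀ φ : (ℕ → M) → ℝ, Continuous φ →
      TendstoUniformly
        (fun (n : ℕ) (x : ℕ → M) =>
          (n : ℝ)⁻¹ * ((lam ^ n)⁻¹ * (Ruelle μ f)^[n] (birkhoff φ n) x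
            - ∑ j ∈ Finset.range n,
                (lam ^ (n - j))⁻¹ * (Ruelle μ f)^[n - j] (fun y => φ y * h y) x))
        (fun _ => 0) atTop := by
  intro φ hφ
  have hu : Tendsto (fun j => (lam ^ j)⁻¹ • (ruelleOperator μ hf ^ j) 1) atTop
      (𝓝 ⟨h, hhc⟩) := by
    rw [ContinuousMap.tendsto_iff_tendstoUniformly]
    simpa [coe_ruelleOperator_pow_apply] using hconv
  have hlim := tendsto_smul_pow_birkhoff_sub (monotone_ruelleOperator μ hf)
    (ruelleOperator_mul_shiftKoopman μ hf) hu ⟨φ, hφ⟩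
  rw [ContinuousMap.tendsto_iff_tendstoUniformly] at hlim
  convert hlim using 3 with n x
  · simp only [ContinuousMap.smul_apply, ContinuousMap.sub_apply, ContinuousMap.sum_apply,
      coe_ruelleOperator_pow_apply, coe_sum_shiftKoopman_pow_apply, smul_eq_mul]
    rfl
  · rfl

/-- Replacement of λ^{-j}L_f^j𝟙 by the eigenfunction in Birkhoff sums. -/
theorem birkhoff_sum_replace_eigenfunction
    {M : Type*} [MetricSpace M] [CompactSpace M] [MeasurableSpace M] [BorelSpace M]
    (μ : Measure M) [IsProbabilityMeasure μ]
    (hfull : ∀ U : Set M, IsOpen U → U.Nonempty → 0 < μ U)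
    (f : (ℕ → M) → ℝ) (hf : Continuous f)
    (lam : ℝ) (hlam : 0 < lam)
    (h : (ℕ → M) → ℝ) (hhc : Continuous h) (hhpos : ∀ x, 0 < h x)
    (hconv : TendstoUniformly
      (fun (j : ℕ) (x : ℕ → M) => (lam ^ j)⁻¹ * (Ruelle μ f)^[j] 1 x) h atTop) :
    ∀ φ : (ℕ → M) → ℝ, Continuous φ →
      TendstoUniformly
        (fun (n : ℕ) (x : ℕ → M) =>
          (n : ℝ)⁻¹ * ((lam ^ n)⁻¹ * (Ruelle μ f)^[n] (birkhoff φ n) x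
            - ∑ j ∈ Finset.range n,
                (lam ^ (n - j))⁻¹ * (Ruelle μ f)^[n - j] (fun y => φ y * h y) x))
        (fun _ => 0) atTop :=
  birkhoff_sum_replace_eigenfunction_general μ f hf lam h hhc hconv
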